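/- For any finite set X ⊆ {0, 1, ..., n}, define π(X, t) = #{j ∈ X : j < t} + (n - t if t ∉ X, else 0). Then the map t ↦ π(X, t) is a permutation of {0, 1, ..., n}. -/
import Mathlib


theorem pi_X_is_permutation (n : ℕ) (X : Finset ℕ) (hX : X ⊆ Finset.range (n + 1)) :
    Set.BijOn
      (fun t => (X.filter (fun j => j < t)).card + (if t ∈ X then 0 else n - t))
      {t : ℕ | t ≤ n} {t : ℕ | t ≤ n} := by
  have hb : ∀ t, t ≤ n → (X.filter (fun j => j < t)).card ≤ t := by
    intro t ht
    calc (X.filter (fun j => j < t)).card ≤ (Finset.range t).card := by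
          apply Finset.card_le_card
          intro j hj
          simp only [Finset.mem_filter] at hj
          exact Finset.mem_range.mpr hj.2
      _ = t := Finset.card_range t
  have hmaps : Set.MapsTo
      (fun t => (X.filter (fun j => j < t)).card + (if t ∈ X then 0 else n - t))
      {t : ℕ | t ≤ n} {t : ℕ | t ≤ n} := by
    intro t ht
    simp only [Set.mem_setOf_eq] at *
    have := hb t ht
    by_cases h : t ∈ X <;> simp only [h, if_true, if_false] <;> omega
  have key : ∀ s t, s < t → t ≤ n →
      (X.filter (fun j => j < s)).card + (if s ∈ X then 0 else n - s) ≠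
      (X.filter (fun j => j < t)).card + (if t ∈ X then 0 else n - t) := by
    intro s t hst htn
    by_cases hs : s ∈ X
    · have hlt : (X.filter (fun j => j < s)).card < (X.filter (fun j => j < t)).card := by
        apply Finset.card_lt_card
        constructor
        · intro j hj
          simp only [Finset.mem_filter] at *
          exact ⟨hj.1, hj.2.trans hst⟩
        · intro hsub
          have := hsub (Finset.mem_filter.mpr ⟨hs, hst⟩)
          simp only [Finset.mem_filter] at this
          omega
      by_cases ht : t ∈ X <;> simp only [hs, ht, if_true, if_false] <;> omega
    · have hbt : (X.filter (fun j => j < t)).card ≤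
          (X.filter (fun j => j < s)).card + (t - s - 1) := by
        calc (X.filter (fun j => j < t)).card
            ≤ (X.filter (fun j => j < s) ∪ Finset.Ioo s t).card := by
              apply Finset.card_le_card
              intro j hj
              simp only [Finset.mem_filter] at hj
              rcases lt_or_ge j s with h | h
              · exact Finset.mem_union_left _ (Finset.mem_filter.mpr ⟨hj.1, h⟩)
              · apply Finset.mem_union_right
                have : j ≠ s := by rintro rfl; exact hs hj.1
                exact Finset.mem_Ioo.mpr ⟨lt_of_le_of_ne h (Ne.symm this), hj.2⟩
          _ ≤ (X.filter (fun j => j < s)).card + (Finset.Ioo s t).card :=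
              Finset.card_union_le _ _
          _ = (X.filter (fun j => j < s)).card + (t - s - 1) := by rw [Nat.card_Ioo]
      by_cases ht : t ∈ X <;> simp only [hs, ht, if_true, if_false] <;> omega
  have hinj : Set.InjOn
      (fun t => (X.filter (fun j => j < t)).card + (if t ∈ X then 0 else n - t))
      {t : ℕ | t ≤ n} := by
    intro s hs t ht heq
    simp only [Set.mem_setOf_eq] at hs ht
    simp only at heq
    rcases lt_trichotomy s t with h | h | h
    · exact absurd heq (key s t h ht)
    · exact h
    · exact absurd heq.symm (key t s h hs)
  exact (Set.Finite.injOn_iff_bijOn_of_mapsTo (Set.finite_Iic n) hmaps).mp hinj
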